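/- In a finite-horizon Dynkin game on a finite probability space with payoff H(σ,τ) = X_σ·1_{σ<τ} + Y_τ·1_{τ≤σ}, where (X_k) and (Y_k) are adapted processes with Y_k ≤ X_k for all k ≤ N, the game has a value: inf_σ sup_τ E[H(σ,τ)] = sup_τ inf_σ E[H(σ,τ)], with σ, τ ranging over stopping times with values in {0,...,N}. -/

import Mathlib

/-!
Backward induction produces the value process `V_N = Y_N`,
`V_k = min (X_k, max (Y_k, E[V_{k+1} | 𝒢_k]))`, which is squeezed between `Y` and `X`. Let `σ*`
be the first time `V = X` and `τ*` the first time `V = Y`. Before `σ*` the minimum is not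
attained at `X`, so `V` dominates its conditional expectation and `V` stopped at `σ*` is a
supermartingale; symmetrically `V` stopped at `τ*` is a submartingale. Optional stopping then
gives `E[H(σ*, τ)] ≤ E[V_{τ ∧ σ*}] ≤ E[V_0] ≤ E[V_{σ ∧ τ*}] ≤ E[H(σ, τ*)]` for all stopping
times `σ, τ`, so `(σ*, τ*)` is a saddle point and the game has the value `E[V_0]`.
-/

open MeasureTheory Set

theorem IsSaddlePointOn.ciInf_ciSup_eq_ciSup_ciInf {α β γ : Type*}
    [ConditionallyCompleteLattice γ] {f : α → β → γ} {a : α} {b : β}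
    (h : IsSaddlePointOn univ univ f a b)
    (hf₁ : ∀ x, BddAbove (range (f x))) (hf₂ : ∀ y, BddBelow (range (f · y))) :
    ⨅ x, ⨆ y, f x y = ⨆ y, ⨅ x, f x y := by
  have : Nonempty α := ⟨a⟩
  have : Nonempty β := ⟨b⟩
  have hsup : ∀ x, f a b ≤ ⨆ y, f x y := fun x =>
    (h x trivial b trivial).trans (le_ciSup (hf₁ x) b)
  have hinf : ∀ y, ⨅ x, f x y ≤ f a b := fun y =>
    (ciInf_le (hf₂ y) a).trans (h a trivial y trivial)
  apply le_antisymm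
  · calc ⨅ x, ⨆ y, f x y ≤ ⨆ y, f a y := ciInf_le ⟨f a b, forall_mem_range.2 hsup⟩ a
      _ ≤ f a b := ciSup_le fun y => h a trivial y trivial
      _ ≤ ⨅ x, f x b := le_ciInf fun x => h x trivial b trivial
      _ ≤ ⨆ y, ⨅ x, f x y := le_ciSup ⟨f a b, forall_mem_range.2 hinf⟩ b
  · exact (ciSup_le hinf).trans (le_ciInf hsup)

theorem finite_subtype_and_forall_le {Ω : Type*} [Finite Ω] (P : (Ω → ℕ) → Prop) (N : ℕ) :
    Finite {σ : Ω → ℕ // P σ ∧ ∀ ω, σ ω ≤ N} :=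
  Finite.of_injective (fun σ ω => (⟨σ.1 ω, Nat.lt_succ_of_le (σ.2.2 ω)⟩ : Fin (N + 1)))
    fun _ _ h => Subtype.ext (funext fun ω => congrArg Fin.val (congrFun h ω))

namespace MeasureTheory

variable {Ω : Type*} {m0 : MeasurableSpace Ω} {μ : Measure Ω} {𝒢 : Filtration ℕ m0}

theorem Integrable.of_finite_of_aestronglyMeasurable [Finite Ω] [IsFiniteMeasure μ] {f : Ω → ℝ}
    (hf : AEStronglyMeasurable f μ) : Integrable f μ :=
  let ⟨C, hC⟩ := (finite_range fun ω => ‖f ω‖).bddAbove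
  .of_bound hf C (ae_of_all _ fun ω => hC ⟨ω, rfl⟩)

theorem IsStoppingTime.min_natCast {σ τ : Ω → ℕ}
    (hσ : IsStoppingTime 𝒢 fun ω => (σ ω : WithTop ℕ))
    (hτ : IsStoppingTime 𝒢 fun ω => (τ ω : WithTop ℕ)) :
    IsStoppingTime 𝒢 fun ω => ((min (σ ω) (τ ω) : ℕ) : WithTop ℕ) := by
  simpa only [Nat.cast_withTop, WithTop.coe_min] using hσ.min hτ

theorem Adapted.measurable_stoppedValue_natCast {u : ℕ → Ω → ℝ} (hu : Adapted 𝒢 u)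
    {σ : Ω → ℕ} (hσ : IsStoppingTime 𝒢 fun ω => (σ ω : WithTop ℕ)) :
    Measurable fun ω => u (σ ω) ω :=
  (measurable_stoppedValue hu.stronglyAdapted.isStronglyProgressive_of_discrete hσ).mono
    hσ.measurableSpace_le le_rfl

theorem stoppedProcess_succ_sub (f : ℕ → Ω → ℝ) (τ : Ω → WithTop ℕ) (i : ℕ) :
    stoppedProcess f τ (i + 1) - stoppedProcess f τ i =
      {ω | (i : WithTop ℕ) < τ ω}.indicator (f (i + 1) - f i) := by
  ext ω
  simp only [Pi.sub_apply, stoppedProcess, indicator, mem_ofPred_eq, Nat.cast_withTop]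
  cases τ ω with
  | top => simp only [min_top_right, WithTop.untopD_coe, WithTop.coe_lt_top, if_true]
  | coe k =>
    simp only [← WithTop.coe_min, WithTop.untopD_coe, WithTop.coe_lt_coe]
    by_cases h : i < k
    · simp [h, h.le]
    · simp [h, not_lt.1 h, (not_lt.1 h).trans i.le_succ]

theorem stoppedValue_stoppedProcess_natCast (u : ℕ → Ω → ℝ) (σ τ : Ω → ℕ) :
    stoppedValue (stoppedProcess u fun ω => (τ ω : WithTop ℕ)) (fun ω => (σ ω : WithTop ℕ)) =
      fun ω => u (min (σ ω) (τ ω)) ω := by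
  ext ω
  simp only [stoppedValue, stoppedProcess, Nat.cast_withTop, WithTop.untopD_coe,
    ← WithTop.coe_min]

theorem stoppedProcess_zero (u : ℕ → Ω → ℝ) (τ : Ω → WithTop ℕ) :
    stoppedProcess u τ 0 = u 0 :=
  funext fun _ => stoppedProcess_eq_of_le (by simp)

variable [IsFiniteMeasure μ]

theorem submartingale_stoppedProcess_of_le_condExp {f : ℕ → Ω → ℝ} {τ : Ω → WithTop ℕ}
    (hf : StronglyAdapted 𝒢 f) (hint : ∀ i, Integrable (f i) μ) (hτ : IsStoppingTime 𝒢 τ)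
    (hle : ∀ i : ℕ, ∀ᵐ ω ∂μ, (i : WithTop ℕ) < τ ω → f i ω ≤ μ[f (i + 1)|𝒢 i] ω) :
    Submartingale (stoppedProcess f τ) 𝒢 μ := by
  refine submartingale_of_condExp_sub_nonneg_nat (hf.stoppedProcess_of_discrete hτ)
    (integrable_stoppedProcess hτ hint) fun i => ?_
  have hcond : μ[f (i + 1) - f i|𝒢 i] =ᵐ[μ] μ[f (i + 1)|𝒢 i] - f i := by
    have h := condExp_sub (hint (i + 1)) (hint i) (𝒢 i) (μ := μ)
    rwa [condExp_of_stronglyMeasurable (𝒢.le i) (hf i) (hint i)] at h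
  have hA : MeasurableSet[𝒢 i] {ω | (i : WithTop ℕ) < τ ω} := hτ.measurableSet_gt i
  rw [stoppedProcess_succ_sub]
  filter_upwards [condExp_indicator ((hint (i + 1)).sub (hint i)) hA, hcond, hle i]
    with ω hind hsub hleω
  rw [Pi.zero_apply, hind, indicator_apply]
  split_ifs with hω
  · rw [hsub, Pi.sub_apply, sub_nonneg]
    exact hleω hω
  · exact le_rfl

theorem supermartingale_stoppedProcess_of_condExp_le {f : ℕ → Ω → ℝ} {τ : Ω → WithTop ℕ}
    (hf : StronglyAdapted 𝒢 f) (hint : ∀ i, Integrable (f i) μ) (hτ : IsStoppingTime 𝒢 τ)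
    (hle : ∀ i : ℕ, ∀ᵐ ω ∂μ, (i : WithTop ℕ) < τ ω → μ[f (i + 1)|𝒢 i] ω ≤ f i ω) :
    Supermartingale (stoppedProcess f τ) 𝒢 μ := by
  have hneg := submartingale_stoppedProcess_of_le_condExp hf.neg (fun i => (hint i).neg) hτ
    fun i => by
      filter_upwards [hle i, condExp_neg (f (i + 1)) (𝒢 i) (μ := μ)] with ω hω hneg hlt
      simp only [Pi.neg_apply, hneg, neg_le_neg_iff]
      exact hω hlt
  simpa using hneg.neg

theorem integral_le_integral_min_of_submartingale_stoppedProcess {u : ℕ → Ω → ℝ}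
    {σ τ : Ω → ℕ} (hu : Submartingale (stoppedProcess u fun ω => (τ ω : WithTop ℕ)) 𝒢 μ)
    (hσ : IsStoppingTime 𝒢 fun ω => (σ ω : WithTop ℕ)) {N : ℕ} (hσN : ∀ ω, σ ω ≤ N) :
    ∫ ω, u 0 ω ∂μ ≤ ∫ ω, u (min (σ ω) (τ ω)) ω ∂μ := by
  have h := hu.expected_stoppedValue_mono (isStoppingTime_const 𝒢 0) hσ (fun _ => bot_le)
    (N := N) fun ω => WithTop.coe_le_coe.2 (hσN ω)
  rwa [stoppedValue_const, stoppedProcess_zero, stoppedValue_stoppedProcess_natCast] at h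

theorem integral_min_le_integral_of_supermartingale_stoppedProcess {u : ℕ → Ω → ℝ}
    {σ τ : Ω → ℕ} (hu : Supermartingale (stoppedProcess u fun ω => (τ ω : WithTop ℕ)) 𝒢 μ)
    (hσ : IsStoppingTime 𝒢 fun ω => (σ ω : WithTop ℕ)) {N : ℕ} (hσN : ∀ ω, σ ω ≤ N) :
    ∫ ω, u (min (σ ω) (τ ω)) ω ∂μ ≤ ∫ ω, u 0 ω ∂μ := by
  have h := integral_le_integral_min_of_submartingale_stoppedProcess
    (u := -u) (by simpa using hu.neg) hσ hσN
  simpa only [Pi.neg_apply, integral_neg, neg_le_neg_iff] using h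

end MeasureTheory

namespace DynkinGame

variable {Ω : Type*} {m0 : MeasurableSpace Ω}

noncomputable def value (μ : Measure Ω) (𝒢 : Filtration ℕ m0) (X Y : ℕ → Ω → ℝ) (N k : ℕ) :
    Ω → ℝ :=
  if k < N then fun ω => min (X k ω) (max (Y k ω) (μ[value μ 𝒢 X Y N (k + 1)|𝒢 k] ω)) else Y k
termination_by N - k

variable {μ : Measure Ω} {𝒢 : Filtration ℕ m0} {X Y : ℕ → Ω → ℝ} {N k : ℕ}

theorem value_of_lt (hk : k < N) : value μ 𝒢 X Y N k =
    fun ω => min (X k ω) (max (Y k ω) (μ[value μ 𝒢 X Y N (k + 1)|𝒢 k] ω)) := by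
  rw [value, if_pos hk]

theorem value_of_le (hk : N ≤ k) : value μ 𝒢 X Y N k = Y k := by
  rw [value, if_neg hk.not_gt]

theorem adapted_value (hX : Adapted 𝒢 X) (hY : Adapted 𝒢 Y) : Adapted 𝒢 (value μ 𝒢 X Y N) := by
  intro k
  rcases lt_or_ge k N with hk | hk
  · rw [value_of_lt hk]
    exact (hX k).min ((hY k).max stronglyMeasurable_condExp.measurable)
  · rw [value_of_le hk]
    exact hY k

theorem le_value (hYX : ∀ k ≤ N, ∀ ω, Y k ω ≤ X k ω) (k : ℕ) (ω : Ω) :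
    Y k ω ≤ value μ 𝒢 X Y N k ω := by
  rcases lt_or_ge k N with hk | hk
  · rw [value_of_lt hk]
    exact le_min (hYX k hk.le ω) (le_max_left _ _)
  · rw [value_of_le hk]

theorem value_le (hYX : ∀ k ≤ N, ∀ ω, Y k ω ≤ X k ω) (hk : k ≤ N) (ω : Ω) :
    value μ 𝒢 X Y N k ω ≤ X k ω := by
  rcases hk.lt_or_eq with hk | rfl
  · rw [value_of_lt hk]
    exact min_le_left _ _
  · rw [value_of_le le_rfl]
    exact hYX k le_rfl ω

theorem condExp_le_value (hk : k < N) {ω : Ω} (hω : value μ 𝒢 X Y N k ω ≠ X k ω) :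
    μ[value μ 𝒢 X Y N (k + 1)|𝒢 k] ω ≤ value μ 𝒢 X Y N k ω := by
  rw [value_of_lt hk] at hω ⊢
  grind

theorem value_le_condExp (hYX : ∀ k ≤ N, ∀ ω, Y k ω ≤ X k ω) (hk : k < N) {ω : Ω}
    (hω : value μ 𝒢 X Y N k ω ≠ Y k ω) :
    value μ 𝒢 X Y N k ω ≤ μ[value μ 𝒢 X Y N (k + 1)|𝒢 k] ω := by
  have hYXk := hYX k hk.le ω
  rw [value_of_lt hk] at hω ⊢
  grind

-- `hittingBtwn` returns `N` when the set is never hit, so `sellerStop = N` if `V < X` before `N`;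
-- `buyerStop` always hits, since `V_N = Y_N`.
variable (μ 𝒢 X Y N) in
noncomputable def sellerStop : Ω → ℕ :=
  hittingBtwn (fun k ω => value μ 𝒢 X Y N k ω - X k ω) {0} 0 N

variable (μ 𝒢 X Y N) in
noncomputable def buyerStop : Ω → ℕ :=
  hittingBtwn (fun k ω => value μ 𝒢 X Y N k ω - Y k ω) {0} 0 N

theorem isStoppingTime_sellerStop (hX : Adapted 𝒢 X) (hY : Adapted 𝒢 Y) :
    IsStoppingTime 𝒢 (fun ω => (sellerStop μ 𝒢 X Y N ω : WithTop ℕ)) :=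
  Adapted.isStoppingTime_hittingBtwn ((adapted_value hX hY).sub hX) (measurableSet_singleton 0)

theorem isStoppingTime_buyerStop (hX : Adapted 𝒢 X) (hY : Adapted 𝒢 Y) :
    IsStoppingTime 𝒢 (fun ω => (buyerStop μ 𝒢 X Y N ω : WithTop ℕ)) :=
  Adapted.isStoppingTime_hittingBtwn ((adapted_value hX hY).sub hY) (measurableSet_singleton 0)

theorem sellerStop_le (ω : Ω) : sellerStop μ 𝒢 X Y N ω ≤ N := hittingBtwn_le ω

theorem buyerStop_le (ω : Ω) : buyerStop μ 𝒢 X Y N ω ≤ N := hittingBtwn_le ω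

theorem value_sellerStop {ω : Ω} (hω : sellerStop μ 𝒢 X Y N ω < N) :
    value μ 𝒢 X Y N (sellerStop μ 𝒢 X Y N ω) ω = X (sellerStop μ 𝒢 X Y N ω) ω :=
  sub_eq_zero.1 (hittingBtwn_mem_set_of_hittingBtwn_lt hω)

theorem value_buyerStop (ω : Ω) :
    value μ 𝒢 X Y N (buyerStop μ 𝒢 X Y N ω) ω = Y (buyerStop μ 𝒢 X Y N ω) ω := by
  have hN : value μ 𝒢 X Y N N ω - Y N ω ∈ ({0} : Set ℝ) := by
    rw [value_of_le le_rfl, sub_self]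
    rfl
  exact sub_eq_zero.1 (hittingBtwn_mem_set (u := fun k ω => value μ 𝒢 X Y N k ω - Y k ω)
    ⟨N, right_mem_Icc.2 N.zero_le, hN⟩)

theorem value_ne_of_lt_sellerStop {i : ℕ} {ω : Ω} (hi : i < sellerStop μ 𝒢 X Y N ω) :
    value μ 𝒢 X Y N i ω ≠ X i ω := fun h =>
  (hittingBtwn_le_of_mem i.zero_le (hi.trans_le (sellerStop_le ω)).le
    (sub_eq_zero.2 h)).not_gt hi

theorem value_ne_of_lt_buyerStop {i : ℕ} {ω : Ω} (hi : i < buyerStop μ 𝒢 X Y N ω) :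
    value μ 𝒢 X Y N i ω ≠ Y i ω := fun h =>
  (hittingBtwn_le_of_mem i.zero_le (hi.trans_le (buyerStop_le ω)).le
    (sub_eq_zero.2 h)).not_gt hi

variable (X Y) in
def payoff (σ τ : Ω → ℕ) : Ω → ℝ := fun ω => if σ ω < τ ω then X (σ ω) ω else Y (τ ω) ω

theorem measurable_payoff (hX : Adapted 𝒢 X) (hY : Adapted 𝒢 Y) {σ τ : Ω → ℕ}
    (hσ : IsStoppingTime 𝒢 fun ω => (σ ω : WithTop ℕ))
    (hτ : IsStoppingTime 𝒢 fun ω => (τ ω : WithTop ℕ)) :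
    Measurable (payoff X Y σ τ) :=
  Measurable.ite
    (measurableSet_lt (WithTop.measurable_untopA.comp hσ.measurable')
      (WithTop.measurable_untopA.comp hτ.measurable'))
    (hX.measurable_stoppedValue_natCast hσ) (hY.measurable_stoppedValue_natCast hτ)

theorem payoff_sellerStop_le_value (hYX : ∀ k ≤ N, ∀ ω, Y k ω ≤ X k ω) {τ : Ω → ℕ} {ω : Ω}
    (hτN : τ ω ≤ N) :
    payoff X Y (sellerStop μ 𝒢 X Y N) τ ω ≤
      value μ 𝒢 X Y N (min (τ ω) (sellerStop μ 𝒢 X Y N ω)) ω := by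
  unfold payoff
  split_ifs with h
  · rw [min_eq_right h.le, value_sellerStop (h.trans_le hτN)]
  · rw [min_eq_left (not_lt.1 h)]
    exact le_value hYX _ ω

theorem value_le_payoff_buyerStop (hYX : ∀ k ≤ N, ∀ ω, Y k ω ≤ X k ω) {σ : Ω → ℕ} {ω : Ω}
    (hσN : σ ω ≤ N) :
    value μ 𝒢 X Y N (min (σ ω) (buyerStop μ 𝒢 X Y N ω)) ω ≤
      payoff X Y σ (buyerStop μ 𝒢 X Y N) ω := by
  unfold payoff
  split_ifs with h
  · rw [min_eq_left h.le]
    exact value_le hYX hσN ω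
  · rw [min_eq_right (not_lt.1 h), value_buyerStop]

variable [Finite Ω] [IsFiniteMeasure μ]

theorem integrable_value (hX : Adapted 𝒢 X) (hY : Adapted 𝒢 Y) (k : ℕ) :
    Integrable (value μ 𝒢 X Y N k) μ :=
  .of_finite_of_aestronglyMeasurable
    ((adapted_value hX hY).measurable (i := k)).aestronglyMeasurable

theorem supermartingale_stoppedProcess_sellerStop (hX : Adapted 𝒢 X) (hY : Adapted 𝒢 Y) :
    Supermartingale (stoppedProcess (value μ 𝒢 X Y N)
      fun ω => (sellerStop μ 𝒢 X Y N ω : WithTop ℕ)) 𝒢 μ :=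
  supermartingale_stoppedProcess_of_condExp_le (adapted_value hX hY).stronglyAdapted
    (integrable_value hX hY) (isStoppingTime_sellerStop hX hY) fun i => ae_of_all _ fun ω hi => by
      have hi : i < sellerStop μ 𝒢 X Y N ω := by exact_mod_cast hi
      exact condExp_le_value (hi.trans_le (sellerStop_le ω)) (value_ne_of_lt_sellerStop hi)

theorem submartingale_stoppedProcess_buyerStop (hX : Adapted 𝒢 X) (hY : Adapted 𝒢 Y)
    (hYX : ∀ k ≤ N, ∀ ω, Y k ω ≤ X k ω) :
    Submartingale (stoppedProcess (value μ 𝒢 X Y N)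
      fun ω => (buyerStop μ 𝒢 X Y N ω : WithTop ℕ)) 𝒢 μ :=
  submartingale_stoppedProcess_of_le_condExp (adapted_value hX hY).stronglyAdapted
    (integrable_value hX hY) (isStoppingTime_buyerStop hX hY) fun i => ae_of_all _ fun ω hi => by
      have hi : i < buyerStop μ 𝒢 X Y N ω := by exact_mod_cast hi
      exact value_le_condExp hYX (hi.trans_le (buyerStop_le ω)) (value_ne_of_lt_buyerStop hi)

theorem integral_payoff_sellerStop_le (hX : Adapted 𝒢 X) (hY : Adapted 𝒢 Y)
    (hYX : ∀ k ≤ N, ∀ ω, Y k ω ≤ X k ω) {τ : Ω → ℕ}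
    (hτ : IsStoppingTime 𝒢 fun ω => (τ ω : WithTop ℕ)) (hτN : ∀ ω, τ ω ≤ N) :
    ∫ ω, payoff X Y (sellerStop μ 𝒢 X Y N) τ ω ∂μ ≤ ∫ ω, value μ 𝒢 X Y N 0 ω ∂μ := by
  have hσ := isStoppingTime_sellerStop (μ := μ) (N := N) hX hY
  calc ∫ ω, payoff X Y (sellerStop μ 𝒢 X Y N) τ ω ∂μ
      ≤ ∫ ω, value μ 𝒢 X Y N (min (τ ω) (sellerStop μ 𝒢 X Y N ω)) ω ∂μ :=
        integral_mono (.of_finite_of_aestronglyMeasurable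
            (measurable_payoff hX hY hσ hτ).aestronglyMeasurable)
          (.of_finite_of_aestronglyMeasurable
            ((adapted_value hX hY).measurable_stoppedValue_natCast
              (hτ.min_natCast hσ)).aestronglyMeasurable)
          fun _ => payoff_sellerStop_le_value hYX (hτN _)
    _ ≤ ∫ ω, value μ 𝒢 X Y N 0 ω ∂μ :=
        integral_min_le_integral_of_supermartingale_stoppedProcess
          (supermartingale_stoppedProcess_sellerStop hX hY) hτ hτN

theorem integral_value_le_integral_payoff_buyerStop (hX : Adapted 𝒢 X) (hY : Adapted 𝒢 Y)
    (hYX : ∀ k ≤ N, ∀ ω, Y k ω ≤ X k ω) {σ : Ω → ℕ}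
    (hσ : IsStoppingTime 𝒢 fun ω => (σ ω : WithTop ℕ)) (hσN : ∀ ω, σ ω ≤ N) :
    ∫ ω, value μ 𝒢 X Y N 0 ω ∂μ ≤ ∫ ω, payoff X Y σ (buyerStop μ 𝒢 X Y N) ω ∂μ := by
  have hτ := isStoppingTime_buyerStop (μ := μ) (N := N) hX hY
  calc ∫ ω, value μ 𝒢 X Y N 0 ω ∂μ
      ≤ ∫ ω, value μ 𝒢 X Y N (min (σ ω) (buyerStop μ 𝒢 X Y N ω)) ω ∂μ :=
        integral_le_integral_min_of_submartingale_stoppedProcess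
          (submartingale_stoppedProcess_buyerStop hX hY hYX) hσ hσN
    _ ≤ ∫ ω, payoff X Y σ (buyerStop μ 𝒢 X Y N) ω ∂μ :=
        integral_mono (.of_finite_of_aestronglyMeasurable
            ((adapted_value hX hY).measurable_stoppedValue_natCast
              (hσ.min_natCast hτ)).aestronglyMeasurable)
          (.of_finite_of_aestronglyMeasurable
            (measurable_payoff hX hY hσ hτ).aestronglyMeasurable)
          fun _ => value_le_payoff_buyerStop hYX (hσN _)

end DynkinGame

open DynkinGame

/-- Existence of the value of a finite-horizon Dynkin game on a finite
probability space: with adapted payoffs Y ≤ X and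
H(σ,τ) = X_σ·1_{σ<τ} + Y_τ·1_{τ≤σ}, one has inf_σ sup_τ E[H] = sup_τ inf_σ E[H]
over stopping times with values in {0,...,N}. -/
theorem stmt_19 {Ω : Type*} [Fintype Ω] {m0 : MeasurableSpace Ω} (μ : Measure Ω)
    [IsProbabilityMeasure μ] (N : ℕ) (𝒢 : Filtration ℕ m0)
    (X Y : ℕ → Ω → ℝ) (hX : Adapted 𝒢 X) (hY : Adapted 𝒢 Y)
    (hYX : ∀ k ≤ N, ∀ ω, Y k ω ≤ X k ω) :
    (⨅ σ : {σ : Ω → ℕ // IsStoppingTime 𝒢 (fun ω => (σ ω : WithTop ℕ)) ∧ ∀ ω, σ ω ≤ N},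
      ⨆ τ : {τ : Ω → ℕ // IsStoppingTime 𝒢 (fun ω => (τ ω : WithTop ℕ)) ∧ ∀ ω, τ ω ≤ N},
        ∫ ω, (if σ.1 ω < τ.1 ω then X (σ.1 ω) ω else Y (τ.1 ω) ω) ∂μ) =
    (⨆ τ : {τ : Ω → ℕ // IsStoppingTime 𝒢 (fun ω => (τ ω : WithTop ℕ)) ∧ ∀ ω, τ ω ≤ N},
      ⨅ σ : {σ : Ω → ℕ // IsStoppingTime 𝒢 (fun ω => (σ ω : WithTop ℕ)) ∧ ∀ ω, σ ω ≤ N},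
        ∫ ω, (if σ.1 ω < τ.1 ω then X (σ.1 ω) ω else Y (τ.1 ω) ω) ∂μ) := by
  have := finite_subtype_and_forall_le
    (fun σ : Ω → ℕ => IsStoppingTime 𝒢 fun ω => (σ ω : WithTop ℕ)) N
  refine IsSaddlePointOn.ciInf_ciSup_eq_ciSup_ciInf
    (a := ⟨sellerStop μ 𝒢 X Y N, isStoppingTime_sellerStop hX hY, sellerStop_le⟩)
    (b := ⟨buyerStop μ 𝒢 X Y N, isStoppingTime_buyerStop hX hY, buyerStop_le⟩)
    (fun σ _ τ _ => ?_) (fun _ => (finite_range _).bddAbove) (fun _ => (finite_range _).bddBelow)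
  exact (integral_payoff_sellerStop_le hX hY hYX τ.2.1 τ.2.2).trans
    (integral_value_le_integral_payoff_buyerStop hX hY hYX σ.2.1 σ.2.2)
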